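/- Let F be a field of characteristic zero and f ∈ F(t, x₁, …, x_m). Then f satisfies a nonzero linear ordinary differential equation in t with coefficients in F(t) if and only if f is semi-split, i.e., f is a finite sum of products a_i·b_i with a_i ∈ F(t) and b_i ∈ F(x₁, …, x_m). -/

import Mathlib

/-!
If `f = ∑ aᵢ bᵢ` is semi-split, then `f⁽ʲ⁾ = ∑ aᵢ⁽ʲ⁾ bᵢ`, so a linear dependence over `F(t)` among
the vectors `(aᵢ⁽ʲ⁾)ᵢ ∈ F(t)ⁿ`, `0 ≤ j ≤ n`, is an equation for `f`.

Conversely, clear denominators so that `∑ⱼ cⱼ f⁽ʲ⁾ = 0` with `cⱼ ∈ F[t]` and `c_ρ ≠ 0`. Write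
`K = F(x₁, …, x_m)`. In characteristic zero, differentiation raises the order of a pole at an
irreducible `π ∈ K[t]` by exactly one, because `π ∤ π'`. So if `f` had a pole of order `k ≥ 1` at
some `π ∤ c_ρ`, the term `c_ρ f^(ρ)` would have a pole of order `k + ρ` while all the other terms
have poles of smaller order. Hence every prime factor of the denominator of `f` divides `c_ρ`, the
denominator divides a power of `c_ρ ∈ F[t]`, and `f = u / c_ρᴺ` with `u ∈ K[t]` is semi-split.
-/

open Polynomial

/-- The derivative `d/dt` on `K(t)` (with constants `K`), by the quotient rule on the
reduced representation. -/
noncomputable def ratDeriv {K : Type*} [Field K] (f : RatFunc K) : RatFunc K :=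
  (algebraMap K[X] (RatFunc K) (derivative f.num) * algebraMap K[X] (RatFunc K) f.denom -
      algebraMap K[X] (RatFunc K) f.num * algebraMap K[X] (RatFunc K) (derivative f.denom)) /
    algebraMap K[X] (RatFunc K) (f.denom ^ 2)

/-- The natural embedding `F(t) → K(t)` induced by `F ⊆ K`. -/
noncomputable def liftRF {F K : Type*} [Field F] [Field K] [Algebra F K] :
    RatFunc F →+* RatFunc K :=
  RatFunc.mapRingHom (Polynomial.mapRingHom (algebraMap F K)) (by
    intro q hq
    simp only [Submonoid.mem_comap, Polynomial.coe_mapRingHom]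
    exact mem_nonZeroDivisors_of_ne_zero
      ((Polynomial.map_ne_zero_iff (algebraMap F K).injective).mpr
        (nonZeroDivisors.ne_zero hq)))

theorem ne_zero_of_not_dvd {α : Type*} [SemigroupWithZero α] {a b : α} (h : ¬a ∣ b) : b ≠ 0 := by
  rintro rfl
  exact h (dvd_zero a)

section RatDeriv

variable {K : Type*} [Field K]

local notation "A" => algebraMap K[X] (RatFunc K)

theorem algebraMap_div_eq_div_iff {a b c d : K[X]} (hb : b ≠ 0) (hd : d ≠ 0) :
    A a / A b = A c / A d ↔ a * d = c * b := by
  rw [div_eq_div_iff (RatFunc.algebraMap_ne_zero hb) (RatFunc.algebraMap_ne_zero hd),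
    ← map_mul, ← map_mul, (RatFunc.algebraMap_injective K).eq_iff]

theorem ratDeriv_div (p : K[X]) {q : K[X]} (hq : q ≠ 0) :
    ratDeriv (A p / A q) = A (derivative p * q - p * derivative q) / A (q ^ 2) := by
  set r := A p / A q
  have E : r.num * q = p * r.denom := (RatFunc.num_mul_eq_mul_denom_iff hq).mpr rfl
  have E' := congrArg derivative E
  simp only [derivative_mul] at E'
  rw [ratDeriv, ← map_mul, ← map_mul, ← map_sub,
    algebraMap_div_eq_div_iff (pow_ne_zero 2 r.denom_ne_zero) (pow_ne_zero 2 hq)]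
  linear_combination (q * r.denom) * E' - (derivative q * r.denom + q * derivative r.denom) * E

theorem ratDeriv_algebraMap (p : K[X]) : ratDeriv (A p) = A (derivative p) := by
  simpa using ratDeriv_div p one_ne_zero

theorem ratDeriv_algebraMap_eq_zero (b : K) : ratDeriv (algebraMap K (RatFunc K) b) = 0 := by
  rw [RatFunc.algebraMap_eq_C, ← RatFunc.algebraMap_C, ratDeriv_algebraMap, derivative_C,
    map_zero]

theorem ratDeriv_add (x y : RatFunc K) : ratDeriv (x + y) = ratDeriv x + ratDeriv y := by
  have hx := RatFunc.algebraMap_ne_zero x.denom_ne_zero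
  have hy := RatFunc.algebraMap_ne_zero y.denom_ne_zero
  rw [← x.num_div_denom, ← y.num_div_denom, div_add_div _ _ hx hy]
  simp only [← map_mul, ← map_add]
  rw [ratDeriv_div _ (mul_ne_zero x.denom_ne_zero y.denom_ne_zero),
    ratDeriv_div _ x.denom_ne_zero, ratDeriv_div _ y.denom_ne_zero]
  simp only [map_add, map_sub, map_mul, map_pow, derivative_mul]
  field_simp
  ring

theorem ratDeriv_sum {ι : Type*} (s : Finset ι) (g : ι → RatFunc K) :
    ratDeriv (∑ i ∈ s, g i) = ∑ i ∈ s, ratDeriv (g i) := by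
  induction s using Finset.cons_induction with
  | empty => simpa using ratDeriv_algebraMap (0 : K[X])
  | cons i s hi ih => rw [Finset.sum_cons, Finset.sum_cons, ratDeriv_add, ih]

theorem ratDeriv_mul (x y : RatFunc K) : ratDeriv (x * y) = ratDeriv x * y + x * ratDeriv y := by
  have hx := RatFunc.algebraMap_ne_zero x.denom_ne_zero
  have hy := RatFunc.algebraMap_ne_zero y.denom_ne_zero
  rw [← x.num_div_denom, ← y.num_div_denom, div_mul_div_comm]
  simp only [← map_mul]
  rw [ratDeriv_div _ (mul_ne_zero x.denom_ne_zero y.denom_ne_zero),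
    ratDeriv_div _ x.denom_ne_zero, ratDeriv_div _ y.denom_ne_zero]
  simp only [map_add, map_sub, map_mul, map_pow, derivative_mul]
  field_simp
  ring

end RatDeriv

section Lift

variable {F K : Type*} [Field F] [Field K] [Algebra F K]

theorem liftRF_algebraMap (p : F[X]) :
    (liftRF (algebraMap F[X] (RatFunc F) p) : RatFunc K) =
      algebraMap K[X] (RatFunc K) (p.map (algebraMap F K)) := by
  rw [liftRF, RatFunc.coe_mapRingHom_eq_coe_map]
  simpa using RatFunc.map_apply_div (mapRingHom (algebraMap F K)) _ p 1

theorem liftRF_ratDeriv (x : RatFunc F) :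
    (liftRF (ratDeriv x) : RatFunc K) = ratDeriv (liftRF x) := by
  obtain ⟨p, q, hq, rfl⟩ : ∃ p q : F[X], q ≠ 0 ∧
      x = algebraMap F[X] (RatFunc F) p / algebraMap F[X] (RatFunc F) q :=
    ⟨x.num, x.denom, x.denom_ne_zero, x.num_div_denom.symm⟩
  have hq' : q.map (algebraMap F K) ≠ 0 :=
    (Polynomial.map_ne_zero_iff (algebraMap F K).injective).mpr hq
  simp only [ratDeriv_div _ hq, map_div₀, liftRF_algebraMap, ratDeriv_div _ hq']
  simp [derivative_map]

end Lift

section PoleOrder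

variable {K : Type*} [Field K]

local notation "A" => algebraMap K[X] (RatFunc K)

def HasPoleOrder (π : K[X]) (r : RatFunc K) (k : ℕ) : Prop :=
  ∃ a b : K[X], ¬π ∣ a ∧ ¬π ∣ b ∧ r = A a / A (π ^ k * b)

def HasPoleOrderLE (π : K[X]) (r : RatFunc K) (n : ℕ) : Prop :=
  ∃ a b : K[X], ¬π ∣ b ∧ r = A a / A (π ^ n * b)

variable {π : K[X]}

theorem HasPoleOrder.hasPoleOrderLE {r : RatFunc K} {k : ℕ} (h : HasPoleOrder π r k) :
    HasPoleOrderLE π r k :=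
  let ⟨a, b, _, hb, hr⟩ := h
  ⟨a, b, hb, hr⟩

theorem hasPoleOrderLE_zero (hπ : Prime π) (n : ℕ) : HasPoleOrderLE π 0 n :=
  ⟨0, 1, hπ.not_dvd_one, by rw [map_zero, zero_div]⟩

theorem HasPoleOrderLE.add (hπ : Prime π) {r s : RatFunc K} {n : ℕ} (hr : HasPoleOrderLE π r n)
    (hs : HasPoleOrderLE π s n) : HasPoleOrderLE π (r + s) n := by
  obtain ⟨a, b, hb, rfl⟩ := hr
  obtain ⟨c, d, hd, rfl⟩ := hs
  have hπ0 := RatFunc.algebraMap_ne_zero hπ.ne_zero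
  have hb0 := RatFunc.algebraMap_ne_zero (ne_zero_of_not_dvd hb)
  have hd0 := RatFunc.algebraMap_ne_zero (ne_zero_of_not_dvd hd)
  refine ⟨a * d + c * b, b * d, hπ.not_dvd_mul hb hd, ?_⟩
  simp only [map_add, map_mul, map_pow]
  field_simp

theorem HasPoleOrderLE.neg {r : RatFunc K} {n : ℕ} (hr : HasPoleOrderLE π r n) :
    HasPoleOrderLE π (-r) n :=
  let ⟨a, b, hb, hr⟩ := hr
  ⟨-a, b, hb, by rw [hr, map_neg, neg_div]⟩

theorem HasPoleOrderLE.mono (hπ : π ≠ 0) {r : RatFunc K} {n m : ℕ} (hnm : n ≤ m)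
    (hr : HasPoleOrderLE π r n) : HasPoleOrderLE π r m := by
  obtain ⟨a, b, hb, rfl⟩ := hr
  obtain ⟨t, rfl⟩ := Nat.exists_eq_add_of_le hnm
  have hπ0 := RatFunc.algebraMap_ne_zero hπ
  have hb0 := RatFunc.algebraMap_ne_zero (ne_zero_of_not_dvd hb)
  refine ⟨π ^ t * a, b, hb, ?_⟩
  simp only [map_mul, map_pow, pow_add]
  field_simp

theorem HasPoleOrderLE.algebraMap_mul {r : RatFunc K} {n : ℕ} (c : K[X])
    (hr : HasPoleOrderLE π r n) : HasPoleOrderLE π (A c * r) n :=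
  let ⟨a, b, hb, hr⟩ := hr
  ⟨c * a, b, hb, by rw [hr, mul_div_assoc', ← map_mul]⟩

theorem HasPoleOrder.algebraMap_mul (hπ : Prime π) {r : RatFunc K} {k : ℕ} {c : K[X]}
    (hc : ¬π ∣ c) (hr : HasPoleOrder π r k) : HasPoleOrder π (A c * r) k :=
  let ⟨a, b, ha, hb, hr⟩ := hr
  ⟨c * a, b, hπ.not_dvd_mul hc ha, hb, by rw [hr, mul_div_assoc', ← map_mul]⟩

theorem HasPoleOrder.not_hasPoleOrderLE (hπ : Prime π) {r : RatFunc K} {k n : ℕ} (hnk : n < k)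
    (hr : HasPoleOrder π r k) : ¬HasPoleOrderLE π r n := by
  rintro ⟨c, d, hd, hcd⟩
  obtain ⟨a, b, ha, hb, rfl⟩ := hr
  obtain ⟨t, rfl⟩ := Nat.exists_eq_add_of_lt hnk
  have hcross := (algebraMap_div_eq_div_iff
    (mul_ne_zero (pow_ne_zero _ hπ.ne_zero) (ne_zero_of_not_dvd hb))
    (mul_ne_zero (pow_ne_zero _ hπ.ne_zero) (ne_zero_of_not_dvd hd))).mp hcd
  have : a * d = π * (π ^ t * c * b) := by
    refine mul_left_cancel₀ (pow_ne_zero n hπ.ne_zero) ?_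
    linear_combination hcross
  exact hπ.not_dvd_mul ha hd ⟨_, this⟩

theorem hasPoleOrder_of_dvd_denom (hπ : Prime π) {r : RatFunc K} (h : π ∣ r.denom) :
    ∃ k ≠ 0, HasPoleOrder π r k := by
  obtain ⟨k, b, hb, hden⟩ := WfDvdMonoid.max_power_factor r.denom_ne_zero hπ.irreducible
  refine ⟨k, ?_, r.num, b,
    fun hnum => hπ.not_isUnit ((r.isCoprime_num_denom).isUnit_of_dvd' hnum h), hb,
    by rw [← hden, r.num_div_denom]⟩
  rintro rfl
  exact hb (by simpa [hden] using h)

theorem hasPoleOrder_ratDeriv [CharZero K] (hπ : Prime π) {r : RatFunc K} {k : ℕ} (hk : k ≠ 0)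
    (hr : HasPoleOrder π r k) : HasPoleOrder π (ratDeriv r) (k + 1) := by
  obtain ⟨a, b, ha, hb, rfl⟩ := hr
  obtain ⟨k, rfl⟩ := Nat.exists_eq_add_one_of_ne_zero hk
  have hb0 := ne_zero_of_not_dvd hb
  have hπ' : ¬π ∣ derivative π := fun h =>
    hπ.not_isUnit (((separable_def π).mp hπ.irreducible.separable).isUnit_of_dvd' dvd_rfl h)
  have hk' : ¬π ∣ C (k + 1 : K) := fun h =>
    hπ.not_isUnit (isUnit_of_dvd_unit h (isUnit_C.mpr (Ne.isUnit k.cast_add_one_ne_zero)))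
  -- the new numerator is `-(k + 1) a π' b` modulo `π`
  refine ⟨π * (derivative a * b - a * derivative b) - C (k + 1 : K) * a * derivative π * b, b ^ 2,
    fun h => hπ.not_dvd_mul (hπ.not_dvd_mul (hπ.not_dvd_mul hk' ha) hπ') hb
      ((dvd_sub_right (dvd_mul_right π _)).mp h),
    fun h => hb (hπ.dvd_of_dvd_pow h), ?_⟩
  rw [ratDeriv_div _ (mul_ne_zero (pow_ne_zero _ hπ.ne_zero) hb0),
    algebraMap_div_eq_div_iff (pow_ne_zero _ (mul_ne_zero (pow_ne_zero _ hπ.ne_zero) hb0))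
      (mul_ne_zero (pow_ne_zero _ hπ.ne_zero) (pow_ne_zero _ hb0))]
  simp only [derivative_mul, derivative_pow, Nat.add_sub_cancel, Nat.cast_add, Nat.cast_one]
  ring

theorem hasPoleOrder_iterate_ratDeriv [CharZero K] (hπ : Prime π) {r : RatFunc K} {k : ℕ}
    (hk : k ≠ 0) (hr : HasPoleOrder π r k) (j : ℕ) :
    HasPoleOrder π (ratDeriv^[j] r) (k + j) := by
  induction j with
  | zero => exact hr
  | succ j ih =>
    rw [Function.iterate_succ_apply']
    exact hasPoleOrder_ratDeriv hπ (by omega : k + j ≠ 0) ih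

theorem Prime.dvd_of_dvd_denom_of_sum_iterate_ratDeriv_eq_zero [CharZero K] (hπ : Prime π)
    {f : RatFunc K} {ρ : ℕ} {c : ℕ → K[X]}
    (hode : ∑ j ∈ Finset.range (ρ + 1), A (c j) * ratDeriv^[j] f = 0) (hπf : π ∣ f.denom) :
    π ∣ c ρ := by
  by_contra hc
  obtain ⟨k, hk, hf⟩ := hasPoleOrder_of_dvd_denom hπ hπf
  have hlead : HasPoleOrder π (A (c ρ) * ratDeriv^[ρ] f) (k + ρ) :=
    (hasPoleOrder_iterate_ratDeriv hπ hk hf ρ).algebraMap_mul hπ hc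
  have hlower : HasPoleOrderLE π (∑ j ∈ Finset.range ρ, A (c j) * ratDeriv^[j] f) (k + ρ - 1) :=
    Finset.sum_induction _ (HasPoleOrderLE π · (k + ρ - 1)) (fun _ _ => HasPoleOrderLE.add hπ)
      (hasPoleOrderLE_zero hπ _) fun j hj =>
        ((hasPoleOrder_iterate_ratDeriv hπ hk hf j).hasPoleOrderLE.mono hπ.ne_zero
          (by rw [Finset.mem_range] at hj; omega)).algebraMap_mul _
  rw [Finset.sum_range_succ, add_eq_zero_iff_neg_eq] at hode
  exact hlead.not_hasPoleOrderLE hπ (by omega) (hode ▸ hlower.neg)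

open UniqueFactorizationMonoid in
theorem exists_denom_dvd_pow_of_sum_iterate_ratDeriv_eq_zero [CharZero K] {f : RatFunc K}
    {ρ : ℕ} {c : ℕ → K[X]} (hc : c ρ ≠ 0)
    (hode : ∑ j ∈ Finset.range (ρ + 1), A (c j) * ratDeriv^[j] f = 0) :
    ∃ n, f.denom ∣ c ρ ^ n := by
  classical
  rw [exists_dvd_pow_iff_radical_dvd f.denom_ne_zero, radical_dvd_iff_primeFactors_subset hc]
  intro π hπ
  simp only [mem_primeFactors, mem_normalizedFactors_iff' f.denom_ne_zero,
    mem_normalizedFactors_iff' hc] at hπ ⊢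
  exact ⟨hπ.1, hπ.2.1, hπ.1.prime.dvd_of_dvd_denom_of_sum_iterate_ratDeriv_eq_zero hode hπ.2.2⟩

end PoleOrder

theorem exists_top_ne_zero_of_sum_range_smul_eq_zero {R M : Type*} [Semiring R]
    [AddCommMonoid M] [Module R M] {v : ℕ → M} {ℓ : ℕ → R} :
    ∀ {N : ℕ}, (∃ j < N, ℓ j ≠ 0) → ∑ j ∈ Finset.range N, ℓ j • v j = 0 →
      ∃ ρ, ℓ ρ ≠ 0 ∧ ∑ j ∈ Finset.range (ρ + 1), ℓ j • v j = 0
  | 0, ⟨_, hj, _⟩, _ => absurd hj (Nat.not_lt_zero _)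
  | N + 1, ⟨j, hj, hℓj⟩, h => by
    by_cases hN : ℓ N = 0
    · refine exists_top_ne_zero_of_sum_range_smul_eq_zero (N := N) ⟨j, ?_, hℓj⟩ ?_
      · exact lt_of_le_of_ne (Nat.le_of_lt_succ hj) (by rintro rfl; exact hℓj hN)
      · rwa [Finset.sum_range_succ, hN, zero_smul, add_zero] at h
    · exact ⟨N, hN, h⟩

theorem FiniteDimensional.exists_ne_zero_sum_range_succ_smul_eq_zero {R V : Type*}
    [DivisionRing R] [AddCommGroup V] [Module R V] [FiniteDimensional R V] (v : ℕ → V) :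
    ∃ (ρ : ℕ) (ℓ : ℕ → R), ℓ ρ ≠ 0 ∧ ∑ j ∈ Finset.range (ρ + 1), ℓ j • v j = 0 := by
  set N := Module.finrank R V + 1
  obtain ⟨g, hg, j, hj⟩ := Fintype.not_linearIndependent_iff.mp
    fun h : LinearIndependent R (fun j : Fin N => v j) => by
      simpa [N] using h.fintype_card_le_finrank
  let ℓ : ℕ → R := fun j => if h : j < N then g ⟨j, h⟩ else 0
  have hℓ (j : Fin N) : ℓ j = g j := dif_pos j.isLt
  obtain ⟨ρ, hρ, hsum⟩ :=
    exists_top_ne_zero_of_sum_range_smul_eq_zero (v := v) (ℓ := ℓ) (N := N) ⟨j, j.isLt, by rwa [hℓ]⟩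
      (by rw [← Fin.sum_univ_eq_sum_range]; simpa only [hℓ] using hg)
  exact ⟨ρ, ℓ, hρ, hsum⟩

section SemiSplit

variable (F : Type*) {K : Type*} [Field F] [Field K] [Algebra F K]

def IsSemiSplit (f : RatFunc K) : Prop :=
  ∃ (n : ℕ) (a : Fin n → RatFunc F) (b : Fin n → K),
    f = ∑ i, liftRF (a i) * algebraMap K (RatFunc K) (b i)

def IsDFinite (f : RatFunc K) : Prop :=
  ∃ (ρ : ℕ) (ℓ : ℕ → RatFunc F), ℓ ρ ≠ 0 ∧
    ∑ j ∈ Finset.range (ρ + 1), liftRF (ℓ j) * ratDeriv^[j] f = 0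

variable {F}

theorem isSemiSplit_algebraMap_div (u : K[X]) (g : F[X]) :
    IsSemiSplit F (algebraMap K[X] (RatFunc K) u /
      algebraMap K[X] (RatFunc K) (g.map (algebraMap F K))) := by
  refine ⟨u.natDegree + 1,
    fun i => algebraMap F[X] (RatFunc F) (X ^ (i : ℕ)) / algebraMap F[X] (RatFunc F) g,
    fun i => u.coeff i, ?_⟩
  conv_lhs => rw [u.as_sum_range_C_mul_X_pow]
  rw [← Fin.sum_univ_eq_sum_range, map_sum, Finset.sum_div]
  refine Finset.sum_congr rfl fun i _ => ?_
  rw [map_div₀, liftRF_algebraMap, liftRF_algebraMap, Polynomial.map_pow, map_X,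
    RatFunc.algebraMap_eq_C, ← RatFunc.algebraMap_C, map_mul, div_mul_eq_mul_div, mul_comm]

theorem exists_polynomial_coeffs_of_sum_iterate_ratDeriv_eq_zero {f : RatFunc K} {ρ : ℕ}
    {ℓ : ℕ → RatFunc F} (hℓ : ℓ ρ ≠ 0)
    (hode : ∑ j ∈ Finset.range (ρ + 1), liftRF (ℓ j) * ratDeriv^[j] f = 0) :
    ∃ c : ℕ → F[X], c ρ ≠ 0 ∧ ∑ j ∈ Finset.range (ρ + 1),
      algebraMap K[X] (RatFunc K) ((c j).map (algebraMap F K)) * ratDeriv^[j] f = 0 := by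
  obtain ⟨⟨d, hd⟩, hint⟩ :=
    IsLocalization.exist_integer_multiples (nonZeroDivisors F[X]) (Finset.range (ρ + 1)) ℓ
  choose! c hc using hint
  simp only [Algebra.smul_def] at hc
  have hρ := hc ρ (Finset.self_mem_range_succ ρ)
  refine ⟨c, fun h0 => ?_, ?_⟩
  · rw [h0, map_zero, eq_comm, mul_eq_zero] at hρ
    exact hρ.elim (RatFunc.algebraMap_ne_zero (nonZeroDivisors.ne_zero hd)) hℓ
  · calc _ = ∑ j ∈ Finset.range (ρ + 1),
          liftRF (algebraMap F[X] (RatFunc F) d) * (liftRF (ℓ j) * ratDeriv^[j] f) :=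
          Finset.sum_congr rfl fun j hj => by
            rw [← liftRF_algebraMap, hc j hj, map_mul, mul_assoc]
      _ = 0 := by rw [← Finset.mul_sum, hode, mul_zero]

theorem IsDFinite.isSemiSplit [CharZero K] {f : RatFunc K} (hf : IsDFinite F f) :
    IsSemiSplit F f := by
  obtain ⟨ρ, ℓ, hℓ, hode⟩ := hf
  obtain ⟨c, hc, hodec⟩ := exists_polynomial_coeffs_of_sum_iterate_ratDeriv_eq_zero hℓ hode
  have hc' : (c ρ).map (algebraMap F K) ≠ 0 :=
    (Polynomial.map_ne_zero_iff (algebraMap F K).injective).mpr hc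
  obtain ⟨n, s, hs⟩ := exists_denom_dvd_pow_of_sum_iterate_ratDeriv_eq_zero hc' hodec
  have hs0 : s ≠ 0 := by
    rintro rfl
    exact pow_ne_zero n hc' (by rw [hs, mul_zero])
  have hf : f = algebraMap K[X] (RatFunc K) (f.num * s) /
      algebraMap K[X] (RatFunc K) ((c ρ ^ n).map (algebraMap F K)) := by
    rw [Polynomial.map_pow, hs, map_mul, map_mul,
      mul_div_mul_right _ _ (RatFunc.algebraMap_ne_zero hs0), f.num_div_denom]
  exact hf ▸ isSemiSplit_algebraMap_div _ _

theorem iterate_ratDeriv_sum_liftRF_mul_algebraMap {ι : Type*} (s : Finset ι)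
    (a : ι → RatFunc F) (b : ι → K) (j : ℕ) :
    ratDeriv^[j] (∑ i ∈ s, liftRF (a i) * algebraMap K (RatFunc K) (b i)) =
      ∑ i ∈ s, liftRF (ratDeriv^[j] (a i)) * algebraMap K (RatFunc K) (b i) := by
  induction j with
  | zero => rfl
  | succ j ih =>
    rw [Function.iterate_succ_apply', ih, ratDeriv_sum]
    refine Finset.sum_congr rfl fun i _ => ?_
    rw [ratDeriv_mul, ratDeriv_algebraMap_eq_zero, mul_zero, add_zero, ← liftRF_ratDeriv,
      ← Function.iterate_succ_apply' ratDeriv]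

theorem IsSemiSplit.isDFinite {f : RatFunc K} (hf : IsSemiSplit F f) : IsDFinite F f := by
  obtain ⟨n, a, b, rfl⟩ := hf
  obtain ⟨ρ, ℓ, hℓ, hrel⟩ := FiniteDimensional.exists_ne_zero_sum_range_succ_smul_eq_zero
    (R := RatFunc F) fun j i => ratDeriv^[j] (a i)
  refine ⟨ρ, ℓ, hℓ, ?_⟩
  simp only [iterate_ratDeriv_sum_liftRF_mul_algebraMap, Finset.mul_sum]
  rw [Finset.sum_comm]
  refine Finset.sum_eq_zero fun i _ => ?_
  have hrel_i : ∑ j ∈ Finset.range (ρ + 1), ℓ j * ratDeriv^[j] (a i) = 0 := by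
    simpa using congrFun hrel i
  calc _ = liftRF (∑ j ∈ Finset.range (ρ + 1), ℓ j * ratDeriv^[j] (a i)) *
        algebraMap K (RatFunc K) (b i) := by
        simp only [map_sum, map_mul, Finset.sum_mul, mul_assoc]
    _ = 0 := by rw [hrel_i, map_zero, zero_mul]

end SemiSplit

theorem Dt_separable_iff_semiSplit {F : Type*} [Field F] [CharZero F] (m : ℕ)
    (f : RatFunc (FractionRing (MvPolynomial (Fin m) F))) :
    (∃ (ρ : ℕ) (ℓ : ℕ → RatFunc F), ℓ ρ ≠ 0 ∧
        ∑ j ∈ Finset.range (ρ + 1), liftRF (ℓ j) * ratDeriv^[j] f = 0) ↔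
      (∃ (n : ℕ) (a : Fin n → RatFunc F)
          (b : Fin n → FractionRing (MvPolynomial (Fin m) F)),
        f = ∑ i, liftRF (a i) *
          algebraMap (FractionRing (MvPolynomial (Fin m) F)) _ (b i)) := by
  have : CharZero (FractionRing (MvPolynomial (Fin m) F)) :=
    charZero_of_injective_algebraMap (algebraMap F _).injective
  exact ⟨IsDFinite.isSemiSplit, IsSemiSplit.isDFinite⟩
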